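/- Let K be a field, A a commutative K-algebra, R an associative A-algebra, M an R-R-bimodule. Two abelian extensions of R by M (A-algebra extensions 0 → M → S → R → 0 with M² = 0 inducing the given bimodule structure) are equivalent if and only if any two pairs of K-linear sections produce cohomologous 2-cocycles: if h, h' : R → S are K-linear sections of p and (f,g), (f',g') are the associated cocycles f(r,s) = h(r)h(s) − h(rs), g(a,r) = a·h(r) − h(ar), then (f − f', g − g') ∈ B²(A,R,M). -/

import Mathlib

/-!
Fix a `K`-linear section `h` of `p`. Every element of `S` is uniquely `h r + ι m`, and in these
coordinates the product and the `A`-action of `S` are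
`(h r + ι m) (h r' + ι m') = h (r r') + ι (f r r' + r m' + m r')` and
`a (h r + ι m) = h (a r) + ι (g a r + a m)`,
so `S` is determined up to equivalence by the cocycle `(f, g)`. An equivalence `φ : S → S'`
carries `h` to another section `h' + ι' k` of `p'`, whose cocycle differs from `(f', g')` by the
coboundary of `k`; conversely, a `k` with `(f - f', g - g') = ∂k` makes
`h r + ι m ↦ h' r + ι' (m + k r)` an equivalence.
-/

section AbelianExtension

open MulOpposite

variable {K A R M S S' : Type*} [CommSemiring K] [CommRing A] [Ring R] [Algebra A R]
  [AddCommGroup M] [Module K M] [Module R M] [Module Rᵐᵒᵖ M]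
  [Ring S] [Algebra A S] [Module K S] [Ring S'] [Algebra A S'] [Module K S']

structure IsAbelianExtension (p : S →ₐ[A] R) (ι : M →ₗ[K] S) : Prop where
  injective : Function.Injective ι
  map_eq_zero_iff : ∀ x, p x = 0 ↔ x ∈ Set.range ι
  mul_eq_zero : ∀ m m', ι m * ι m' = 0
  map_smul_eq_mul : ∀ s m, ι (p s • m) = s * ι m
  map_op_smul_eq_mul : ∀ s m, ι (op (p s) • m) = ι m * s

namespace IsAbelianExtension

variable {p : S →ₐ[A] R} {ι : M →ₗ[K] S} (E : IsAbelianExtension p ι)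
include E

theorem map_ι (m : M) : p (ι m) = 0 :=
  (E.map_eq_zero_iff _).2 ⟨m, rfl⟩

theorem map_algebraMap_smul (a : A) (m : M) : ι (algebraMap A R a • m) = a • ι m := by
  rw [← p.commutes, E.map_smul_eq_mul, Algebra.smul_def]

end IsAbelianExtension

variable [Module K R]

structure IsCocycleOfSection (p : S →ₐ[A] R) (ι : M →ₗ[K] S) (h : R →ₗ[K] S)
    (f : R → R → M) (g : A → R → M) : Prop where
  map_section : ∀ r, p (h r) = r
  cocycle_mul : ∀ r s, ι (f r s) = h r * h s - h (r * s)
  cocycle_smul : ∀ a r, ι (g a r) = a • h r - h (a • r)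

def IsCoboundaryOf (F : R → R → M) (G : A → R → M) (k : R →ₗ[K] M) : Prop :=
  (∀ r s, F r s = r • k s - k (r * s) + op s • k r) ∧
    ∀ a r, G a r = algebraMap A R a • k r - k (a • r)

namespace IsAbelianExtension

variable {p : S →ₐ[A] R} {ι : M →ₗ[K] S} (E : IsAbelianExtension p ι)
include E

theorem exists_isCocycleOfSection {h : R →ₗ[K] S} (hh : ∀ r, p (h r) = r) :
    ∃ f g, IsCocycleOfSection p ι h f g := by
  have hf : ∀ r s, ∃ m, ι m = h r * h s - h (r * s) := fun r s =>
    (E.map_eq_zero_iff _).1 (by rw [map_sub, map_mul, hh, hh, hh, sub_self])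
  have hg : ∀ (a : A) r, ∃ m, ι m = a • h r - h (a • r) := fun a r =>
    (E.map_eq_zero_iff _).1 (by rw [map_sub, map_smul, hh, hh, sub_self])
  choose f hf using hf
  choose g hg using hg
  exact ⟨f, g, hh, hf, hg⟩

variable {h : R →ₗ[K] S} {f : R → R → M} {g : A → R → M} (c : IsCocycleOfSection p ι h f g)
include c

theorem section_add_mul_section_add (r r' : R) (m m' : M) :
    (h r + ι m) * (h r' + ι m') = h (r * r') + ι (f r r' + r • m' + op r' • m) := by
  have hl := E.map_smul_eq_mul (h r) m'
  have hr := E.map_op_smul_eq_mul (h r') m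
  rw [c.map_section] at hl hr
  rw [map_add, map_add, c.cocycle_mul, hl, hr, add_mul, mul_add, mul_add, E.mul_eq_zero]
  abel

theorem smul_section_add (a : A) (r : R) (m : M) :
    a • (h r + ι m) = h (a • r) + ι (g a r + algebraMap A R a • m) := by
  rw [map_add, c.cocycle_smul, E.map_algebraMap_smul, smul_add]
  abel

theorem one_eq_section_add : (1 : S) = h 1 + ι (-f 1 1) := by
  obtain ⟨m, hm⟩ := (E.map_eq_zero_iff (1 - h 1)).1
    (by rw [map_sub, map_one, c.map_section, sub_self])
  have hsq := E.mul_eq_zero m m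
  rw [hm] at hsq
  rw [map_neg, c.cocycle_mul, one_mul, ← sub_eq_zero, ← hsq]
  noncomm_ring

end IsAbelianExtension

variable [Algebra K A] [IsScalarTower K A S]

section Retraction

variable [IsScalarTower K A R]

namespace IsAbelianExtension

variable {p : S →ₐ[A] R} {ι : M →ₗ[K] S} (E : IsAbelianExtension p ι)
  {h : R →ₗ[K] S} (hh : ∀ r, p (h r) = r)

noncomputable def retraction : S →ₗ[K] M :=
  LinearMap.codRestrictOfInjective (LinearMap.id - h ∘ₗ p.toLinearMap.restrictScalars K) ι
    E.injective fun x => LinearMap.mem_range.2 <| (E.map_eq_zero_iff _).1 (by simp [hh])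

theorem ι_retraction (x : S) : ι (E.retraction hh x) = x - h (p x) := by
  rw [retraction, LinearMap.codRestrictOfInjective_comp_apply]
  rfl

theorem section_add_retraction (x : S) : h (p x) + ι (E.retraction hh x) = x := by
  rw [ι_retraction, add_sub_cancel]

theorem retraction_section_add (r : R) (m : M) : E.retraction hh (h r + ι m) = m :=
  E.injective <| by rw [ι_retraction, map_add, hh, E.map_ι, add_zero, add_sub_cancel_left]

end IsAbelianExtension

end Retraction

variable {p : S →ₐ[A] R} {ι : M →ₗ[K] S} {p' : S' →ₐ[A] R} {ι' : M →ₗ[K] S'}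
  {h : R →ₗ[K] S} {h' : R →ₗ[K] S'} {f f' : R → R → M} {g g' : A → R → M}

theorem exists_isCoboundaryOf_sub_of_algHom [IsScalarTower K A S']
    (E' : IsAbelianExtension p' ι') (c : IsCocycleOfSection p ι h f g)
    (c' : IsCocycleOfSection p' ι' h' f' g')
    (φ : S →ₐ[A] S') (hφι : ∀ m, φ (ι m) = ι' m) (hφp : ∀ s, p' (φ s) = p s) :
    ∃ k : R →ₗ[K] M, IsCoboundaryOf (f - f') (g - g') k := by
  let k : R →ₗ[K] M :=
    LinearMap.codRestrictOfInjective (φ.toLinearMap.restrictScalars K ∘ₗ h - h') ι' E'.injective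
      fun r => LinearMap.mem_range.2 <|
        (E'.map_eq_zero_iff _).1 (by simp [hφp, c.map_section, c'.map_section])
  have hφh : ∀ r, φ (h r) = h' r + ι' (k r) := fun r => by
    rw [LinearMap.codRestrictOfInjective_comp_apply]
    simp
  refine ⟨k, fun r s => ?_, fun a r => ?_⟩
  · have e : ι' (f r s) = ι' (f' r s + r • k s + op s • k r - k (r * s)) := by
      rw [← hφι, c.cocycle_mul, map_sub, map_mul, hφh, hφh, hφh,
        E'.section_add_mul_section_add c', map_sub, map_add]
      abel
    rw [Pi.sub_apply, Pi.sub_apply, E'.injective e]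
    abel
  · have e : ι' (g a r) = ι' (g' a r + algebraMap A R a • k r - k (a • r)) := by
      rw [← hφι, c.cocycle_smul, map_sub, map_smul, hφh, hφh, E'.smul_section_add c', map_sub,
        map_add]
      abel
    rw [Pi.sub_apply, Pi.sub_apply, E'.injective e]
    abel

theorem exists_algHom_of_isCoboundaryOf_sub [IsScalarTower K A R]
    (E : IsAbelianExtension p ι) (E' : IsAbelianExtension p' ι') (c : IsCocycleOfSection p ι h f g)
    (c' : IsCocycleOfSection p' ι' h' f' g') {k : R →ₗ[K] M}
    (hk : IsCoboundaryOf (f - f') (g - g') k) :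
    ∃ φ : S →ₐ[A] S', (∀ m, φ (ι m) = ι' m) ∧ ∀ s, p' (φ s) = p s := by
  obtain ⟨hk_mul, hk_smul⟩ := hk
  simp only [Pi.sub_apply] at hk_mul hk_smul
  let pK := p.toLinearMap.restrictScalars K
  let φ : S →ₗ[K] S' := h' ∘ₗ pK + ι' ∘ₗ (E.retraction c.map_section + k ∘ₗ pK)
  have hφ : ∀ r m, φ (h r + ι m) = h' r + ι' (m + k r) := fun r m => by
    simp [φ, pK, E.retraction_section_add, c.map_section, E.map_ι]
  have hdecomp : ∀ x : S, ∃ r m, h r + ι m = x := fun x =>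
    ⟨p x, _, E.section_add_retraction c.map_section x⟩
  have hone : φ 1 = 1 := by
    have h11 : f 1 1 - f' 1 1 = k 1 := by simpa using hk_mul 1 1
    rw [E.one_eq_section_add c, hφ, E'.one_eq_section_add c']
    congr 2
    linear_combination (norm := abel) -h11
  have hmul : ∀ x y : S, φ (x * y) = φ x * φ y := by
    intro x y
    obtain ⟨r, m, rfl⟩ := hdecomp x
    obtain ⟨r', m', rfl⟩ := hdecomp y
    rw [E.section_add_mul_section_add c, hφ, hφ, hφ, E'.section_add_mul_section_add c', smul_add,
      smul_add]
    congr 2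
    linear_combination (norm := abel) hk_mul r r'
  have hsmul : ∀ (a : A) (x : S), φ (a • x) = a • φ x := by
    intro a x
    obtain ⟨r, m, rfl⟩ := hdecomp x
    rw [E.smul_section_add c, hφ, hφ, E'.smul_section_add c', smul_add]
    congr 2
    linear_combination (norm := abel) hk_smul a r
  refine ⟨AlgHom.mk' ⟨⟨⟨φ, hone⟩, hmul⟩, map_zero φ, map_add φ⟩ hsmul, fun m => ?_, fun x => ?_⟩
  · simpa using hφ 0 m
  · obtain ⟨r, m, rfl⟩ := hdecomp x
    simp [hφ, c'.map_section, E'.map_ι, c.map_section, E.map_ι]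

end AbelianExtension

noncomputable section

variable (K A R M S S' : Type*) [Field K] [CommRing A] [Algebra K A]
  [Ring R] [Algebra K R] [Algebra A R] [IsScalarTower K A R]
  [AddCommGroup M] [Module K M] [Module R M] [Module Rᵐᵒᵖ M]
  [SMulCommClass R Rᵐᵒᵖ M] [IsScalarTower K R M]
  [Ring S] [Algebra A S] [Algebra K S] [IsScalarTower K A S]
  [Ring S'] [Algebra A S'] [Algebra K S'] [IsScalarTower K A S']

theorem extensions_equivalent_iff_cocycles_cohomologous
    -- the first abelian extension 0 → M → S → R → 0
    (p : S →ₐ[A] R) (ι : M →ₗ[K] S)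
    (hp : Function.Surjective p) (hι : Function.Injective ι)
    (hker : ∀ x : S, p x = 0 ↔ x ∈ Set.range ι)
    (hsq : ∀ m m' : M, ι m * ι m' = 0)
    (hbimodL : ∀ (s : S) (m : M), ι (p s • m) = s * ι m)
    (hbimodR : ∀ (s : S) (m : M), ι (MulOpposite.op (p s) • m) = ι m * s)
    -- the second abelian extension 0 → M → S' → R → 0
    (p' : S' →ₐ[A] R) (ι' : M →ₗ[K] S')
    (hp' : Function.Surjective p') (hι' : Function.Injective ι')
    (hker' : ∀ x : S', p' x = 0 ↔ x ∈ Set.range ι')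
    (hsq' : ∀ m m' : M, ι' m * ι' m' = 0)
    (hbimodL' : ∀ (s : S') (m : M), ι' (p' s • m) = s * ι' m)
    (hbimodR' : ∀ (s : S') (m : M), ι' (MulOpposite.op (p' s) • m) = ι' m * s) :
    -- equivalence of the two extensions …
    (∃ φ : S →ₐ[A] S', (∀ m : M, φ (ι m) = ι' m) ∧ ∀ s : S, p' (φ s) = p s) ↔
    -- … iff any two pairs of K-linear sections give cohomologous cocycles
    (∀ (h : R →ₗ[K] S) (h' : R →ₗ[K] S'),
      (∀ r, p (h r) = r) → (∀ r, p' (h' r) = r) →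
      ∀ (f f' : R → R → M) (g g' : A → R → M),
        (∀ r s : R, ι (f r s) = h r * h s - h (r * s)) →
        (∀ (a : A) (r : R), ι (g a r) = a • h r - h (a • r)) →
        (∀ r s : R, ι' (f' r s) = h' r * h' s - h' (r * s)) →
        (∀ (a : A) (r : R), ι' (g' a r) = a • h' r - h' (a • r)) →
        ∃ k : R →ₗ[K] M,
          (∀ r s : R,
            f r s - f' r s = r • k s - k (r * s) + MulOpposite.op s • k r) ∧
          (∀ (a : A) (r : R),
            g a r - g' a r = algebraMap A R a • k r - k (a • r))) := by
  have E : IsAbelianExtension p ι := ⟨hι, hker, hsq, hbimodL, hbimodR⟩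
  have E' : IsAbelianExtension p' ι' := ⟨hι', hker', hsq', hbimodL', hbimodR'⟩
  constructor
  · rintro ⟨φ, hφι, hφp⟩ h h' hh hh' f f' g g' hf hg hf' hg'
    exact exists_isCoboundaryOf_sub_of_algHom E' ⟨hh, hf, hg⟩ ⟨hh', hf', hg'⟩ φ hφι hφp
  · intro H
    obtain ⟨h, hh⟩ := (p.toLinearMap.restrictScalars K).exists_rightInverse_of_surjective
      (LinearMap.range_eq_top.2 hp)
    obtain ⟨h', hh'⟩ := (p'.toLinearMap.restrictScalars K).exists_rightInverse_of_surjective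
      (LinearMap.range_eq_top.2 hp')
    obtain ⟨f, g, c⟩ := E.exists_isCocycleOfSection (LinearMap.congr_fun hh)
    obtain ⟨f', g', c'⟩ := E'.exists_isCocycleOfSection (LinearMap.congr_fun hh')
    obtain ⟨k, hk⟩ := H h h' c.map_section c'.map_section f f' g g'
      c.cocycle_mul c.cocycle_smul c'.cocycle_mul c'.cocycle_smul
    exact exists_algHom_of_isCoboundaryOf_sub E E' c c' hk

end
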